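/- For all c, k ∈ ℕ, every (possibly infinite) graph that is c-quasi-isometric to a graph with linewidth at most k has a (k+1, 3c²)-centred line-decomposition. -/

import Mathlib

open SimpleGraph
open scoped ENNReal NNReal

/-- `φ` is a `q`-quasi-isometry from `G` to `H`:
`q⁻¹ · dist_G(u,v) − q ≤ dist_H(φ u, φ v) ≤ q · dist_G(u,v) + q` (distances taken in `ℝ≥0∞`,
where unreachable pairs have distance `∞`), and every vertex of `H` is within distance `q`
of the image of `φ`. -/
def IsQuasiIsometry {V W : Type} (q : ℕ) (G : SimpleGraph V) (H : SimpleGraph W)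
    (φ : V → W) : Prop :=
  (∀ u v : V, (G.edist u v : ℝ≥0∞) / q - q ≤ (H.edist (φ u) (φ v) : ℝ≥0∞)) ∧
  (∀ u v : V, (H.edist (φ u) (φ v) : ℝ≥0∞) ≤ q * (G.edist u v : ℝ≥0∞) + q) ∧
  (∀ x : W, ∃ v : V, (H.edist x (φ v) : ℝ≥0∞) ≤ q)

/-- `G` is `q`-quasi-isometric to `H`. -/
def QuasiIsometric {V W : Type} (q : ℕ) (G : SimpleGraph V) (H : SimpleGraph W) : Prop :=
  ∃ φ : V → W, IsQuasiIsometry q G H φ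

/-- `(T, β)` is a `T`-decomposition of `G`: every edge of `G` has both ends in some bag, and
for every vertex `v` of `G` the set of nodes whose bag contains `v` induces a non-empty
connected subgraph of `T`. -/
def IsTreeDecomp {X V : Type} (T : SimpleGraph X) (G : SimpleGraph V) (β : X → Set V) : Prop :=
  (∀ ⦃u v : V⦄, G.Adj u v → ∃ x : X, u ∈ β x ∧ v ∈ β x) ∧
  (∀ v : V, (T.induce {x : X | v ∈ β x}).Connected)

/-- `(L, β)` is an `L`-decomposition of `G` over the line (linearly ordered set) `L`:
every edge of `G` has both ends in some bag, and for every vertex `v` of `G` the set of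
points of `L` whose bag contains `v` is a non-empty interval of `L`. -/
def IsLineDecomp {L V : Type} [LinearOrder L] (G : SimpleGraph V) (β : L → Set V) : Prop :=
  (∀ ⦃u v : V⦄, G.Adj u v → ∃ x : L, u ∈ β x ∧ v ∈ β x) ∧
  (∀ v : V, {x : L | v ∈ β x}.Nonempty ∧ {x : L | v ∈ β x}.OrdConnected)

/-- `S` is `(k,d)`-centred in `G`: `S` can be partitioned into at most `k` sets, each of
weak diameter at most `d` in `G`. -/
def Centred {V : Type} (G : SimpleGraph V) (k d : ℕ) (S : Set V) : Prop :=
  ∃ P : Fin k → Set V,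
    (⋃ i, P i) = S ∧
    (∀ i j : Fin k, i ≠ j → Disjoint (P i) (P j)) ∧
    (∀ i : Fin k, ∀ u ∈ P i, ∀ v ∈ P i, G.edist u v ≤ (d : ℕ∞))

/-- The independence number of the subgraph of `G` induced by `S` is at most `k`. -/
def IndepAtMost {V : Type} (G : SimpleGraph V) (S : Set V) (k : ℕ) : Prop :=
  ∀ I ⊆ S, (∀ u ∈ I, ∀ v ∈ I, u ≠ v → ¬ G.Adj u v) → I.encard ≤ (k : ℕ∞)

/-- The domination number of the subgraph of `G` induced by `S` is at most `k`. -/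
def DomAtMost {V : Type} (G : SimpleGraph V) (S : Set V) (k : ℕ) : Prop :=
  ∃ D ⊆ S, D.encard ≤ (k : ℕ∞) ∧ ∀ v ∈ S, v ∉ D → ∃ u ∈ D, G.Adj v u

/-- `P` is a partition of the graph `G`: a collection of non-empty vertex sets, each inducing
a connected subgraph of `G`, such that every vertex lies in exactly one part. -/
def IsGraphPartition {V : Type} (G : SimpleGraph V) (P : Set (Set V)) : Prop :=
  (∀ A ∈ P, A.Nonempty) ∧
  (∀ A ∈ P, (G.induce A).Connected) ∧
  (∀ v : V, ∃! A, A ∈ P ∧ v ∈ A)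

/-- The quotient graph `G/P`: vertices are the parts of `P`, and distinct parts are adjacent
iff some vertex of one is adjacent in `G` to some vertex of the other. -/
def quotientGraph {V : Type} (G : SimpleGraph V) (P : Set (Set V)) : SimpleGraph P where
  Adj A B := A ≠ B ∧ ∃ a ∈ (A : Set V), ∃ b ∈ (B : Set V), G.Adj a b
  symm := by
    constructor
    rintro A B ⟨hne, a, ha, b, hb, hab⟩
    exact ⟨hne.symm, b, hb, a, ha, hab.symm⟩
  loopless := by constructor; rintro A ⟨hne, -⟩; exact hne rfl

/-- `sim_G(A) ≤ k`: every induced matching of `G` between `A` and its complement has at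
most `k` edges. -/
def SimAtMost {V : Type} (G : SimpleGraph V) (A : Set V) (k : ℕ) : Prop :=
  ∀ (m : ℕ) (a b : Fin m → V),
    Function.Injective a → Function.Injective b →
    (∀ i, a i ∈ A) → (∀ i, b i ∉ A) →
    (∀ i, G.Adj (a i) (b i)) →
    (∀ i j : Fin m, i ≠ j →
      ¬ G.Adj (a i) (a j) ∧ ¬ G.Adj (b i) (b j) ∧ ¬ G.Adj (a i) (b j)) →
    m ≤ k

/-- `G` has sim-width at most `k`: there is a branch-decomposition `(T, L)` — a subcubic
tree `T` together with a map `L` from the vertices of `G` to the leaves of `T` — such that,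
for every edge `ab` of `T`, the side of the associated vertex partition consisting of the
vertices mapped to the component of `T − ab` containing `a` satisfies `sim_G ≤ k`. -/
def SimWidthAtMost {V : Type} (G : SimpleGraph V) (k : ℕ) : Prop :=
  ∃ (X : Type) (T : SimpleGraph X) (L : V → X),
    T.IsTree ∧
    (∀ x : X, (T.neighborSet x).encard ≤ 3) ∧
    (∀ v : V, (T.neighborSet (L v)).encard = 1) ∧
    (∀ a b : X, T.Adj a b →
      SimAtMost G {v : V | (T.deleteEdges {s(a, b)}).Reachable (L v) a} k)

/-! Bag `x` of the new decomposition consists of the vertices `v` with `φ v` within distance `c`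
of `β x`. Adjacent vertices have images at distance at most `2c`, so a midpoint of a geodesic
between them puts both into a common bag. The bags containing `v` are those meeting the `c`-ball
around `φ v`; this ball is connected in `H`, so these bags form an interval. Finally, vertices whose
images are within `c` of the same `w ∈ β x` have images at distance at most `2c`, hence lie at
distance at most `c · (2c + c) = 3c²` in `G`, and grouping by `w` gives at most `k + 1` parts. -/

namespace Set

theorem OrdConnected.union_of_inter_nonempty {L : Type*} [LinearOrder L] {s t : Set L}
    (hs : s.OrdConnected) (ht : t.OrdConnected) (hst : (s ∩ t).Nonempty) :
    (s ∪ t).OrdConnected := by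
  obtain ⟨m, hms, hmt⟩ := hst
  have Icc_subset : ∀ {s t : Set L}, s.OrdConnected → t.OrdConnected → m ∈ s → m ∈ t →
      ∀ x ∈ s, ∀ y ∈ t, Icc x y ⊆ s ∪ t := by
    intro s t hs ht hms hmt x hx y hy z ⟨hxz, hzy⟩
    rcases le_total z m with hzm | hmz
    · exact .inl (hs.out hx hms ⟨hxz, hzm⟩)
    · exact .inr (ht.out hmt hy ⟨hmz, hzy⟩)
  refine ⟨?_⟩
  rintro x (hx | hx) y (hy | hy)
  · exact (hs.out hx hy).trans subset_union_left
  · exact Icc_subset hs ht hms hmt x hx y hy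
  · exact (Icc_subset ht hs hmt hms x hx y hy).trans (union_comm t s).le
  · exact (ht.out hx hy).trans subset_union_right

end Set

namespace SimpleGraph

variable {W : Type*} {H : SimpleGraph W}

theorem edist_le_length_of_mem_support {a b u : W} (p : H.Walk a b) (hu : u ∈ p.support) :
    H.edist a u ≤ p.length := by
  classical
  exact (edist_le _).trans (by exact_mod_cast p.length_takeUntil_le_length hu)

theorem exists_walk_length_le_of_edist_le {a b : W} {n : ℕ} (h : H.edist a b ≤ n) :
    ∃ p : H.Walk a b, p.length ≤ n := by
  obtain ⟨p, hp⟩ := exists_walk_of_edist_ne_top (ne_top_of_le_ne_top (ENat.natCast_ne_top n) h)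
  exact ⟨p, by exact_mod_cast hp.le.trans h⟩

theorem exists_edist_le_edist_le_of_edist_le_add {a b : W} {s t : ℕ}
    (h : H.edist a b ≤ s + t) : ∃ m, H.edist a m ≤ s ∧ H.edist m b ≤ t := by
  obtain ⟨p, hp⟩ := exists_walk_length_le_of_edist_le (n := s + t) (by exact_mod_cast h)
  refine ⟨p.getVert s, (edist_le (p.take s)).trans ?_, (edist_le (p.drop s)).trans ?_⟩
  · simp
  · simp only [Walk.drop_length, Nat.cast_le]; omega

def cthickening (H : SimpleGraph W) (r : ℕ) (B : Set W) : Set W :=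
  {a | ∃ b ∈ B, H.edist a b ≤ r}

end SimpleGraph

section LineDecomp

variable {L W : Type} [LinearOrder L] {H : SimpleGraph W} {β : L → Set W}

theorem IsLineDecomp.ordConnected_setOf_exists_mem_support (hβ : IsLineDecomp H β)
    {a b : W} (p : H.Walk a b) : {x | ∃ u ∈ p.support, u ∈ β x}.OrdConnected := by
  induction p with
  | nil => simpa using (hβ.2 _).2
  | @cons a a' b hadj q ih =>
    obtain ⟨x, hax, ha'x⟩ := hβ.1 hadj
    have hunion : {x | ∃ u ∈ (Walk.cons hadj q).support, u ∈ β x} =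
        {x | a ∈ β x} ∪ {x | ∃ u ∈ q.support, u ∈ β x} := by
      ext; simp
    rw [hunion]
    exact (hβ.2 a).2.union_of_inter_nonempty ih ⟨x, hax, a', q.start_mem_support, ha'x⟩

theorem IsLineDecomp.ordConnected_setOf_mem_cthickening (hβ : IsLineDecomp H β)
    (a : W) (r : ℕ) : {x | a ∈ H.cthickening r (β x)}.OrdConnected := by
  refine ⟨?_⟩
  rintro x ⟨w₁, hw₁, hd₁⟩ y ⟨w₂, hw₂, hd₂⟩
  obtain ⟨p₁, hp₁⟩ := exists_walk_length_le_of_edist_le hd₁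
  obtain ⟨p₂, hp₂⟩ := exists_walk_length_le_of_edist_le hd₂
  have hnear : ∀ u ∈ (p₁.reverse.append p₂).support, H.edist a u ≤ r := by
    intro u hu
    rw [Walk.mem_support_append_iff, Walk.support_reverse, List.mem_reverse] at hu
    rcases hu with hu | hu
    · exact (edist_le_length_of_mem_support p₁ hu).trans (by exact_mod_cast hp₁)
    · exact (edist_le_length_of_mem_support p₂ hu).trans (by exact_mod_cast hp₂)
  intro z hz
  obtain ⟨u, hu, huz⟩ := (hβ.ordConnected_setOf_exists_mem_support (p₁.reverse.append p₂)).out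
    ⟨w₁, by simp, hw₁⟩ ⟨w₂, by simp, hw₂⟩ hz
  exact ⟨u, huz, hnear u hu⟩

theorem IsLineDecomp.comap_cthickening {V : Type} {G : SimpleGraph V} (hβ : IsLineDecomp H β)
    {φ : V → W} {r : ℕ} (hφ : ∀ ⦃u v⦄, G.Adj u v → H.edist (φ u) (φ v) ≤ r + r) :
    IsLineDecomp G (fun x : L => φ ⁻¹' H.cthickening r (β x)) := by
  refine ⟨fun u v huv => ?_, fun v => ⟨?_, hβ.ordConnected_setOf_mem_cthickening (φ v) r⟩⟩
  · obtain ⟨m, hum, hmv⟩ := exists_edist_le_edist_le_of_edist_le_add (hφ huv)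
    obtain ⟨x, hmx⟩ := (hβ.2 m).1
    exact ⟨x, ⟨m, hmx, hum⟩, ⟨m, hmx, SimpleGraph.edist_comm ▸ hmv⟩⟩
  · obtain ⟨x, hx⟩ := (hβ.2 (φ v)).1
    exact ⟨x, φ v, hx, by simp⟩

end LineDecomp

section Centred

variable {V : Type} {G : SimpleGraph V} {k d : ℕ} {S : Set V}

theorem centred_of_subset_iUnion (C : Fin k → Set V) (hS : S ⊆ ⋃ i, C i)
    (hC : ∀ i, ∀ u ∈ C i, ∀ v ∈ C i, G.edist u v ≤ d) : Centred G k d S := by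
  refine ⟨fun i => S ∩ disjointed C i, ?_, fun i j hij => ?_, fun i u hu v hv => ?_⟩
  · rw [← Set.inter_iUnion, iUnion_disjointed, Set.inter_eq_left.mpr hS]
  · exact (disjoint_disjointed C hij).mono Set.inter_subset_right Set.inter_subset_right
  · exact hC i u (disjointed_subset C i hu.2) v (disjointed_subset C i hv.2)

theorem centred_of_subset_biUnion {ι : Type*} {T : Set ι} (C : ι → Set V) (hT : T.encard ≤ k)
    (hS : S ⊆ ⋃ t ∈ T, C t) (hC : ∀ t ∈ T, ∀ u ∈ C t, ∀ v ∈ C t, G.edist u v ≤ d) :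
    Centred G k d S := by
  obtain ⟨hTfin, hTcard⟩ := Set.encard_le_coe_iff_finite_ncard_le.mp hT
  have := hTfin.fintype
  obtain ⟨e⟩ : Nonempty (T ↪ Fin k) := Function.Embedding.nonempty_of_card_le (by
    rwa [Fintype.card_fin, ← Nat.card_eq_fintype_card, Nat.card_coe_set_eq])
  refine centred_of_subset_iUnion (fun i => ⋃ (t : T) (_ : e t = i), C t) ?_ ?_
  · intro v hv
    obtain ⟨t, ht, hvt⟩ := Set.mem_iUnion₂.mp (hS hv)
    exact Set.mem_iUnion.mpr ⟨e ⟨t, ht⟩, Set.mem_iUnion₂.mpr ⟨⟨t, ht⟩, rfl, hvt⟩⟩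
  · intro i u hu v hv
    obtain ⟨t, rfl, hut⟩ := Set.mem_iUnion₂.mp hu
    obtain ⟨t', htt', hvt'⟩ := Set.mem_iUnion₂.mp hv
    exact hC t t.2 u hut v (e.injective htt' ▸ hvt')

end Centred

section QuasiIsometry

variable {V W : Type} {q : ℕ} {G : SimpleGraph V} {H : SimpleGraph W} {φ : V → W}

theorem IsQuasiIsometry.edist_map_le_of_adj (hφ : IsQuasiIsometry q G H φ) {u v : V}
    (h : G.Adj u v) : H.edist (φ u) (φ v) ≤ q + q := by
  have hle := hφ.2.1 u v
  rw [SimpleGraph.edist_eq_one_iff_adj.mpr h] at hle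
  exact ENat.toENNReal_le.mp (hle.trans_eq (by simp))

theorem IsQuasiIsometry.edist_le_of_edist_map_le (hφ : IsQuasiIsometry q G H φ) {u v : V}
    {r : ℕ} (h : H.edist (φ u) (φ v) ≤ r) : G.edist u v ≤ (r + q) * q := by
  have hdiv : (G.edist u v : ℝ≥0∞) / q ≤ r + q :=
    tsub_le_iff_right.mp ((hφ.1 u v).trans (by exact_mod_cast h))
  -- for `q = 0` this still holds: `x / 0 = ⊤` in `ℝ≥0∞` unless `x = 0`
  rw [ENNReal.div_le_iff_le_mul (.inr (by simp)) (.inl (by simp))] at hdiv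
  exact_mod_cast hdiv

end QuasiIsometry

/-- For all `c, k ∈ ℕ`, every (possibly infinite) graph that is
`c`-quasi-isometric to a graph with linewidth at most `k` has a `(k+1, 3c²)`-centred
line-decomposition. -/
theorem centredLineDecomp_of_quasiIsometric_boundedLinewidth
    (c k : ℕ) (V W : Type) (G : SimpleGraph V) (H : SimpleGraph W)
    (hH : ∃ (L : Type) (instL : LinearOrder L) (β : L → Set W),
      @IsLineDecomp L W instL H β ∧ ∀ x : L, (β x).encard ≤ ((k + 1 : ℕ) : ℕ∞))
    (hQI : QuasiIsometric c G H) :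
    ∃ (L : Type) (instL : LinearOrder L) (β : L → Set V),
      @IsLineDecomp L V instL G β ∧ ∀ x : L, Centred G (k + 1) (3 * c ^ 2) (β x) := by
  obtain ⟨L, instL, β, hβ, hcard⟩ := hH
  obtain ⟨φ, hφ⟩ := hQI
  refine ⟨L, instL, fun x => φ ⁻¹' H.cthickening c (β x),
    hβ.comap_cthickening fun u v huv => hφ.edist_map_le_of_adj huv, fun x => ?_⟩
  refine centred_of_subset_biUnion (fun w => {v | H.edist (φ v) w ≤ c}) (hcard x)
    (fun v ⟨w, hw, hvw⟩ => Set.mem_biUnion hw hvw) fun w _ u hu v hv => ?_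
  have hφuv : H.edist (φ u) (φ v) ≤ (c + c : ℕ) := by
    push_cast
    exact SimpleGraph.edist_triangle.trans (add_le_add hu (SimpleGraph.edist_comm ▸ hv))
  calc G.edist u v ≤ ((c + c + c) * c : ℕ) := by exact_mod_cast hφ.edist_le_of_edist_map_le hφuv
    _ = (3 * c ^ 2 : ℕ) := by ring_nf
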